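/- Let Δ be the 8×8 Hermitian block-antidiagonal matrix Δ = [[0_{6×6}, M],[M†, 0_{2×2}]] where M is the 6×2 real matrix with nonzero entries M(2,1) = √2·g/4, M(3,1) = −1/4, M(4,2) = 1/4, M(5,2) = −√2·g/4 (1-indexed rows), and g ∈ [0,1]. Then the trace norm (nuclear norm) of Δ equals √(1+2g²). -/

import Mathlib

open Real in
/-- The 8×8 block-antidiagonal matrix `Δ = [[0, M],[Mᵀ, 0]]` built from the 6×2
matrix `M` with nonzero entries `M(2,1) = √2·g/4`, `M(3,1) = −1/4`,
`M(4,2) = 1/4`, `M(5,2) = −√2·g/4`. -/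
noncomputable def Δmat (g : ℝ) : Matrix (Fin 8) (Fin 8) ℝ :=
  !![0, 0, 0, 0, 0, 0, 0, 0;
     0, 0, 0, 0, 0, 0, Real.sqrt 2 * g / 4, 0;
     0, 0, 0, 0, 0, 0, -(1/4), 0;
     0, 0, 0, 0, 0, 0, 0, 1/4;
     0, 0, 0, 0, 0, 0, 0, -(Real.sqrt 2 * g / 4);
     0, 0, 0, 0, 0, 0, 0, 0;
     0, Real.sqrt 2 * g / 4, -(1/4), 0, 0, 0, 0, 0;
     0, 0, 0, 1/4, -(Real.sqrt 2 * g / 4), 0, 0, 0]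

/-!
Δ³ = ((1 + 2g²)/16) Δ, so every eigenvalue λ of Δ satisfies λ³ = cλ with c = (1 + 2g²)/16,
i.e. λ ∈ {0, ±√c}; in all cases |λ| = λ²/√c. Summing, the trace norm is tr(Δ²)/√c, and
tr(Δ²) = (1 + 2g²)/4.
-/

open Matrix

lemma abs_eq_sq_div_sqrt_of_pow_three_eq {x c : ℝ} (hx : x ^ 3 = c * x) :
    |x| = x ^ 2 / √c := by
  rcases mul_eq_zero.mp (show x * (x ^ 2 - c) = 0 by linear_combination hx) with h | h
  · simp [h]
  · rw [← Real.sqrt_sq_eq_abs, sub_eq_zero.mp h, Real.div_sqrt]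

namespace Matrix.IsHermitian

variable {𝕜 n : Type*} [RCLike 𝕜] [Fintype n] [DecidableEq n] {A : Matrix n n 𝕜}

lemma trace_mul_self_eq_sum_sq_eigenvalues (hA : A.IsHermitian) :
    (A * A).trace = ∑ i, ((hA.eigenvalues i ^ 2 : ℝ) : 𝕜) := by
  conv_lhs => rw [hA.spectral_theorem, ← map_mul, Unitary.conjStarAlgAut_apply, trace_mul_cycle,
    Unitary.coe_star_mul_self, one_mul, diagonal_mul_diagonal, trace_diagonal]
  simp [sq]

lemma eigenvalues_pow_three_of_cube_eq_smul (hA : A.IsHermitian) {c : ℝ}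
    (hcube : A * A * A = c • A) (i : n) :
    hA.eigenvalues i ^ 3 = c * hA.eigenvalues i := by
  set v := hA.eigenvectorBasis i
  have hv : A *ᵥ v = hA.eigenvalues i • ⇑v := hA.mulVec_eigenvectorBasis i
  have hv0 : (v : n → 𝕜) ≠ 0 :=
    (WithLp.ofLp_eq_zero 2).ne.2 <| hA.eigenvectorBasis.orthonormal.ne_zero i
  have h := congrArg (· *ᵥ (v : n → 𝕜)) hcube
  simp only [← mulVec_mulVec, hv, mulVec_smul, smul_mulVec, smul_smul] at h
  exact smul_left_injective ℝ hv0 (by simpa only [pow_three] using h)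

lemma sum_abs_eigenvalues_of_cube_eq_smul (hA : A.IsHermitian) {c : ℝ}
    (hcube : A * A * A = c • A) :
    ∑ i, |hA.eigenvalues i| = (∑ i, hA.eigenvalues i ^ 2) / √c := by
  rw [Finset.sum_div]
  exact Finset.sum_congr rfl fun i _ ↦
    abs_eq_sq_div_sqrt_of_pow_three_eq (hA.eigenvalues_pow_three_of_cube_eq_smul hcube i)

end Matrix.IsHermitian

noncomputable def Δsq (g : ℝ) : Matrix (Fin 8) (Fin 8) ℝ :=
  !![0, 0, 0, 0, 0, 0, 0, 0;
     0, g ^ 2 / 8, -(√2 * g / 16), 0, 0, 0, 0, 0;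
     0, -(√2 * g / 16), 1 / 16, 0, 0, 0, 0, 0;
     0, 0, 0, 1 / 16, -(√2 * g / 16), 0, 0, 0;
     0, 0, 0, -(√2 * g / 16), g ^ 2 / 8, 0, 0, 0;
     0, 0, 0, 0, 0, 0, 0, 0;
     0, 0, 0, 0, 0, 0, (1 + 2 * g ^ 2) / 16, 0;
     0, 0, 0, 0, 0, 0, 0, (1 + 2 * g ^ 2) / 16]

lemma Δmat_mul_self (g : ℝ) : Δmat g * Δmat g = Δsq g := by
  have hsqrt2 : √2 ^ 2 = 2 := Real.sq_sqrt zero_le_two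
  ext i j
  fin_cases i <;> fin_cases j <;>
    simp [Matrix.mul_apply, Fin.sum_univ_eight, Δmat, Δsq] <;>
    first
      | ring1
      | linear_combination (g ^ 2 / 16) * hsqrt2

lemma Δmat_cube (g : ℝ) : Δmat g * Δmat g * Δmat g = ((1 + 2 * g ^ 2) / 16) • Δmat g := by
  have hsqrt2 : √2 ^ 2 = 2 := Real.sq_sqrt zero_le_two
  rw [Δmat_mul_self]
  ext i j
  fin_cases i <;> fin_cases j <;>
    simp [Matrix.mul_apply, Fin.sum_univ_eight, Δmat, Δsq] <;>
    first
      | ring1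
      | linear_combination (g ^ 2 / 64) * hsqrt2
      | linear_combination (-(g ^ 2 / 64)) * hsqrt2

lemma trace_Δmat_mul_self (g : ℝ) : (Δmat g * Δmat g).trace = (1 + 2 * g ^ 2) / 4 := by
  rw [Δmat_mul_self]
  simp [Matrix.trace, Fin.sum_univ_eight, Δsq]
  ring

theorem stmt_8_general (g : ℝ)
    (hΔ : (Δmat g).IsHermitian) :
    (∑ i, |hΔ.eigenvalues i|) = Real.sqrt (1 + 2 * g ^ 2) := by
  have hsq : ∑ i, hΔ.eigenvalues i ^ 2 = (1 + 2 * g ^ 2) / 4 := by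
    simpa [trace_Δmat_mul_self] using hΔ.trace_mul_self_eq_sum_sq_eigenvalues.symm
  have hsqrt16 : √16 = 4 := by
    rw [show (16 : ℝ) = 4 ^ 2 by norm_num, Real.sqrt_sq zero_le_four]
  rw [hΔ.sum_abs_eigenvalues_of_cube_eq_smul (Δmat_cube g), hsq, Real.sqrt_div' _ (by norm_num),
    hsqrt16, div_div_div_cancel_right₀ four_ne_zero, Real.div_sqrt]

/-- The trace norm (sum of absolute values of the eigenvalues) of the Hermitian
matrix `Δ` equals `√(1+2g²)`. -/
theorem stmt_8 (g : ℝ) (hg : g ∈ Set.Icc (0 : ℝ) 1)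
    (hΔ : (Δmat g).IsHermitian) :
    (∑ i, |hΔ.eigenvalues i|) = Real.sqrt (1 + 2 * g ^ 2) :=
  stmt_8_general g hΔ
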